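/- arXiv:1707.07955 — 3 statements merged into one kernel-verified Lean document; each statement's English description precedes it below -/
import Mathlib

section
/- Let k be a field, c₀ ∈ k a nonzero element, and P(x) = c₀x³ − c₀. Let a₁, a₂, a₃ ∈ k be three pairwise distinct nonzero elements, and consider the points pᵢ = (aᵢ, P(aᵢ)/aᵢ) in the affine plane k². Then there exist A, B ∈ k such that yᵢ + A·xᵢ + B = 0 for all three points pᵢ = (xᵢ, yᵢ) if and only if a₁·a₂·a₃ = 1. -/
/-- Three points `(aᵢ, P(aᵢ)/aᵢ)` on the nodal cubic `xy = c₀x³ - c₀` lie on a common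
(non-vertical) line `y + Ax + B = 0` iff `a₁a₂a₃ = 1`. -/
theorem stmt0 {k : Type*} [Field k] (c₀ a₁ a₂ a₃ : k) (hc : c₀ ≠ 0)
    (ha₁ : a₁ ≠ 0) (ha₂ : a₂ ≠ 0) (ha₃ : a₃ ≠ 0)
    (h12 : a₁ ≠ a₂) (h13 : a₁ ≠ a₃) (h23 : a₂ ≠ a₃) :
    (∃ A B : k, ∀ a ∈ ({a₁, a₂, a₃} : Set k),
      (c₀ * a ^ 3 - c₀) / a + A * a + B = 0) ↔ a₁ * a₂ * a₃ = 1 := by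
  constructor
  · rintro ⟨A, B, h⟩
    have e1 := h a₁ (by simp)
    have e2 := h a₂ (by simp)
    have e3 := h a₃ (by simp)
    field_simp at e1 e2 e3
    have key : (-c₀) * ((a₁ - a₂) * ((a₂ - a₃) * ((a₃ - a₁) * (a₁ * a₂ * a₃ - 1)))) = 0 := by
      linear_combination (a₂ * a₃ * (a₂ - a₃)) * e1 + (a₃ * a₁ * (a₃ - a₁)) * e2 +
        (a₁ * a₂ * (a₁ - a₂)) * e3
    have h1 : a₁ - a₂ ≠ 0 := sub_ne_zero.mpr h12
    have h2 : a₂ - a₃ ≠ 0 := sub_ne_zero.mpr h23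
    have h3 : a₃ - a₁ ≠ 0 := sub_ne_zero.mpr h13.symm
    have hlast : a₁ * a₂ * a₃ - 1 = 0 := by
      rcases mul_eq_zero.mp key with h' | h'
      · exact absurd h' (neg_ne_zero.mpr hc)
      · rcases mul_eq_zero.mp h' with h'' | h''
        · exact absurd h'' h1
        · rcases mul_eq_zero.mp h'' with h3' | h3'
          · exact absurd h3' h2
          · rcases mul_eq_zero.mp h3' with h4 | h4
            · exact absurd h4 h3
            · exact h4
    linear_combination hlast
  · intro hp
    refine ⟨-c₀ * (a₁ + a₂ + a₃), c₀ * (a₁ * a₂ + a₁ * a₃ + a₂ * a₃), ?_⟩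
    rintro a (rfl | rfl | rfl)
    · field_simp
      linear_combination c₀ * hp
    · field_simp
      linear_combination c₀ * hp
    · field_simp
      linear_combination c₀ * hp
end

section
/- Let k be a field, c₀ ∈ k nonzero, and P(x) = c₀x³ − c₀. Let a₁, …, a₆ ∈ k be six pairwise distinct nonzero elements and pᵢ = (aᵢ, P(aᵢ)/aᵢ) ∈ k². Then there exist A, B, C, D, E ∈ k such that yᵢ² + A·yᵢ·xᵢ + B·yᵢ + C·xᵢ² + D·xᵢ + E = 0 for all six points pᵢ = (xᵢ, yᵢ) if and only if a₁·a₂·a₃·a₄·a₅·a₆ = 1. -/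
open Polynomial

set_option maxHeartbeats 4000000 in
set_option maxRecDepth 4000 in
/-- Six points `(aᵢ, P(aᵢ)/aᵢ)` on the nodal cubic `xy = c₀x³ - c₀` lie on a common conic
`y² + Axy + By + Cx² + Dx + E = 0` iff `a₁a₂a₃a₄a₅a₆ = 1`. -/
theorem stmt1 {k : Type*} [Field k] (c₀ a₁ a₂ a₃ a₄ a₅ a₆ : k) (hc : c₀ ≠ 0)
    (ha₁ : a₁ ≠ 0) (ha₂ : a₂ ≠ 0) (ha₃ : a₃ ≠ 0)
    (ha₄ : a₄ ≠ 0) (ha₅ : a₅ ≠ 0) (ha₆ : a₆ ≠ 0)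
    (h12 : a₁ ≠ a₂) (h13 : a₁ ≠ a₃) (h14 : a₁ ≠ a₄) (h15 : a₁ ≠ a₅) (h16 : a₁ ≠ a₆)
    (h23 : a₂ ≠ a₃) (h24 : a₂ ≠ a₄) (h25 : a₂ ≠ a₅) (h26 : a₂ ≠ a₆)
    (h34 : a₃ ≠ a₄) (h35 : a₃ ≠ a₅) (h36 : a₃ ≠ a₆)
    (h45 : a₄ ≠ a₅) (h46 : a₄ ≠ a₆) (h56 : a₅ ≠ a₆) :
    (∃ A B C D E : k, ∀ a ∈ ({a₁, a₂, a₃, a₄, a₅, a₆} : Set k),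
      ((c₀ * a ^ 3 - c₀) / a) ^ 2 + A * ((c₀ * a ^ 3 - c₀) / a) * a
        + B * ((c₀ * a ^ 3 - c₀) / a) + C * a ^ 2 + D * a + E = 0) ↔
      a₁ * a₂ * a₃ * a₄ * a₅ * a₆ = 1 := by
  classical
  constructor
  · rintro ⟨A, B, C2, D, E, hall⟩
    set r : Polynomial k :=
        Polynomial.C (A*c₀ + c₀^2*(a₁ + a₂ + a₃ + a₄ + a₅ + a₆)) * X^5
      + Polynomial.C (B*c₀ + C2 - c₀^2*(a₁*a₂ + a₁*a₃ + a₁*a₄ + a₁*a₅ + a₁*a₆ + a₂*a₃ + a₂*a₄ + a₂*a₅ + a₂*a₆ + a₃*a₄ + a₃*a₅ + a₃*a₆ + a₄*a₅ + a₄*a₆ + a₅*a₆)) * X^4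
      + Polynomial.C (D - 2*c₀^2 + c₀^2*(a₁*a₂*a₃ + a₁*a₂*a₄ + a₁*a₂*a₅ + a₁*a₂*a₆ + a₁*a₃*a₄ + a₁*a₃*a₅ + a₁*a₃*a₆ + a₁*a₄*a₅ + a₁*a₄*a₆ + a₁*a₅*a₆ + a₂*a₃*a₄ + a₂*a₃*a₅ + a₂*a₃*a₆ + a₂*a₄*a₅ + a₂*a₄*a₆ + a₂*a₅*a₆ + a₃*a₄*a₅ + a₃*a₄*a₆ + a₃*a₅*a₆ + a₄*a₅*a₆)) * X^3
      + Polynomial.C (E - A*c₀ - c₀^2*(a₁*a₂*a₃*a₄ + a₁*a₂*a₃*a₅ + a₁*a₂*a₃*a₆ + a₁*a₂*a₄*a₅ + a₁*a₂*a₄*a₆ + a₁*a₂*a₅*a₆ + a₁*a₃*a₄*a₅ + a₁*a₃*a₄*a₆ + a₁*a₃*a₅*a₆ + a₁*a₄*a₅*a₆ + a₂*a₃*a₄*a₅ + a₂*a₃*a₄*a₆ + a₂*a₃*a₅*a₆ + a₂*a₄*a₅*a₆ + a₃*a₄*a₅*a₆)) * X^2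
      + Polynomial.C (c₀^2*(a₁*a₂*a₃*a₄*a₅ + a₁*a₂*a₃*a₄*a₆ + a₁*a₂*a₃*a₅*a₆ + a₁*a₂*a₄*a₅*a₆ + a₁*a₃*a₄*a₅*a₆ + a₂*a₃*a₄*a₅*a₆) - B*c₀) * X
      + Polynomial.C (c₀^2 - c₀^2*(a₁*a₂*a₃*a₄*a₅*a₆)) with hr_def
    have heval : ∀ b : k, b ≠ 0 → r.eval b =
        b^2 * (((c₀*b^3 - c₀)/b)^2 + (A)*((c₀*b^3 - c₀)/b)*b + (B)*((c₀*b^3 - c₀)/b) + (C2)*b^2 + (D)*b + (E)) - c₀^2*(b - a₁)*(b - a₂)*(b - a₃)*(b - a₄)*(b - a₅)*(b - a₆) := by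
      intro b hb
      have hy : (c₀*b^3 - c₀)/b * b = c₀*b^3 - c₀ := div_mul_cancel₀ _ hb
      rw [hr_def]
      simp only [Polynomial.eval_add, Polynomial.eval_mul, Polynomial.eval_pow,
        Polynomial.eval_C, Polynomial.eval_X]
      linear_combination (-((((c₀*b^3 - c₀)/b)*b) + (c₀*b^3 - c₀) + A*b^2 + B*b)) * hy
    have hdeg : r.natDegree ≤ 5 := by
      rw [hr_def]
      compute_degree
    have hr0 : r = 0 := by
      apply Polynomial.eq_zero_of_natDegree_lt_card_of_eval_eq_zero' r
          ({a₁, a₂, a₃, a₄, a₅, a₆} : Finset k)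
      · intro b hb
        simp only [Finset.mem_insert, Finset.mem_singleton] at hb
        rcases hb with hb | hb | hb | hb | hb | hb
        · rw [hb, heval a₁ ha₁, hall a₁ (by simp)]; ring
        · rw [hb, heval a₂ ha₂, hall a₂ (by simp)]; ring
        · rw [hb, heval a₃ ha₃, hall a₃ (by simp)]; ring
        · rw [hb, heval a₄ ha₄, hall a₄ (by simp)]; ring
        · rw [hb, heval a₅ ha₅, hall a₅ (by simp)]; ring
        · rw [hb, heval a₆ ha₆, hall a₆ (by simp)]; ring
      · have hcard : ({a₁, a₂, a₃, a₄, a₅, a₆} : Finset k).card = 6 := by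
          simp [Finset.card_insert_of_notMem, Finset.mem_insert, Finset.mem_singleton,
            h12, h13, h14, h15, h16, h23, h24, h25, h26, h34, h35, h36, h45, h46, h56]
        rw [hcard]
        exact lt_of_le_of_lt hdeg (by norm_num)
    have h0 := congrArg (Polynomial.eval 0) hr0
    rw [hr_def] at h0
    simp only [Polynomial.eval_add, Polynomial.eval_mul, Polynomial.eval_pow,
      Polynomial.eval_C, Polynomial.eval_X, Polynomial.eval_zero] at h0
    have hkey : c₀^2 * (a₁ * a₂ * a₃ * a₄ * a₅ * a₆) = c₀^2 * 1 := by
      linear_combination -h0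
    exact mul_left_cancel₀ (pow_ne_zero 2 hc) hkey
  · intro h
    have key : ∀ b : k, b ≠ 0 → (b - a₁)*(b - a₂)*(b - a₃)*(b - a₄)*(b - a₅)*(b - a₆) = 0 →
        ((c₀*b^3 - c₀)/b)^2 + (-(c₀*(a₁ + a₂ + a₃ + a₄ + a₅ + a₆)))*((c₀*b^3 - c₀)/b)*b + (c₀*(a₁*a₂*a₃*a₄*a₅ + a₁*a₂*a₃*a₄*a₆ + a₁*a₂*a₃*a₅*a₆ + a₁*a₂*a₄*a₅*a₆ + a₁*a₃*a₄*a₅*a₆ + a₂*a₃*a₄*a₅*a₆))*((c₀*b^3 - c₀)/b) + (c₀^2*(a₁*a₂ + a₁*a₃ + a₁*a₄ + a₁*a₅ + a₁*a₆ + a₂*a₃ + a₂*a₄ + a₂*a₅ + a₂*a₆ + a₃*a₄ + a₃*a₅ + a₃*a₆ + a₄*a₅ + a₄*a₆ + a₅*a₆) - c₀^2*(a₁*a₂*a₃*a₄*a₅ + a₁*a₂*a₃*a₄*a₆ + a₁*a₂*a₃*a₅*a₆ + a₁*a₂*a₄*a₅*a₆ + a₁*a₃*a₄*a₅*a₆ +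 a₂*a₃*a₄*a₅*a₆))*b^2 + (2*c₀^2 - c₀^2*(a₁*a₂*a₃ + a₁*a₂*a₄ + a₁*a₂*a₅ + a₁*a₂*a₆ + a₁*a₃*a₄ + a₁*a₃*a₅ + a₁*a₃*a₆ + a₁*a₄*a₅ + a₁*a₄*a₆ + a₁*a₅*a₆ + a₂*a₃*a₄ + a₂*a₃*a₅ + a₂*a₃*a₆ + a₂*a₄*a₅ + a₂*a₄*a₆ + a₂*a₅*a₆ + a₃*a₄*a₅ + a₃*a₄*a₆ + a₃*a₅*a₆ + a₄*a₅*a₆))*b + (c₀^2*(a₁*a₂*a₃*a₄ + a₁*a₂*a₃*a₅ + a₁*a₂*a₃*a₆ + a₁*a₂*a₄*a₅ + a₁*a₂*a₄*a₆ + a₁*a₂*a₅*a₆ + a₁*a₃*a₄*a₅ + a₁*a₃*a₄*a₆ + a₁*a₃*a₅*a₆ + a₁*a₄*a₅*a₆ + a₂*a₃*a₄*a₅ + a₂*a₃*a₄*a₆ + a₂*a₃*a₅*a₆ + a₂*a₄*a₅*a₆ + a₃*a₄*a₅*a₆) - c₀^2*(a₁ + a₂ + a₃ + a₄ + a₅ +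 a₆)) = 0 := by
      intro b hb hprod
      have hy : (c₀*b^3 - c₀)/b * b = c₀*b^3 - c₀ := div_mul_cancel₀ _ hb
      apply mul_left_cancel₀ (pow_ne_zero 2 hb)
      rw [mul_zero]
      linear_combination c₀^2 * hprod - c₀^2 * h + ((((c₀*b^3 - c₀)/b)*b) + (c₀*b^3 - c₀) + (-(c₀*(a₁ + a₂ + a₃ + a₄ + a₅ + a₆)))*b^2 + (c₀*(a₁*a₂*a₃*a₄*a₅ + a₁*a₂*a₃*a₄*a₆ + a₁*a₂*a₃*a₅*a₆ + a₁*a₂*a₄*a₅*a₆ + a₁*a₃*a₄*a₅*a₆ + a₂*a₃*a₄*a₅*a₆))*b) * hy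
    refine ⟨-(c₀*(a₁ + a₂ + a₃ + a₄ + a₅ + a₆)), c₀*(a₁*a₂*a₃*a₄*a₅ + a₁*a₂*a₃*a₄*a₆ + a₁*a₂*a₃*a₅*a₆ + a₁*a₂*a₄*a₅*a₆ + a₁*a₃*a₄*a₅*a₆ + a₂*a₃*a₄*a₅*a₆), c₀^2*(a₁*a₂ + a₁*a₃ + a₁*a₄ + a₁*a₅ + a₁*a₆ + a₂*a₃ + a₂*a₄ + a₂*a₅ + a₂*a₆ + a₃*a₄ + a₃*a₅ + a₃*a₆ + a₄*a₅ + a₄*a₆ + a₅*a₆) - c₀^2*(a₁*a₂*a₃*a₄*a₅ + a₁*a₂*a₃*a₄*a₆ + a₁*a₂*a₃*a₅*a₆ + a₁*a₂*a₄*a₅*a₆ + a₁*a₃*a₄*a₅*a₆ + a₂*a₃*a₄*a₅*a₆), 2*c₀^2 - c₀^2*(a₁*a₂*a₃ + a₁*a₂*a₄ + a₁*a₂*a₅ + a₁*a₂*a₆ + a₁*a₃*a₄ + a₁*a₃*a₅ + a₁*a₃*a₆ + a₁*a₄*a₅ + a₁*a₄*a₆ + a₁*a₅*a₆ + a₂*a₃*a₄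 + a₂*a₃*a₅ + a₂*a₃*a₆ + a₂*a₄*a₅ + a₂*a₄*a₆ + a₂*a₅*a₆ + a₃*a₄*a₅ + a₃*a₄*a₆ + a₃*a₅*a₆ + a₄*a₅*a₆), c₀^2*(a₁*a₂*a₃*a₄ + a₁*a₂*a₃*a₅ + a₁*a₂*a₃*a₆ + a₁*a₂*a₄*a₅ + a₁*a₂*a₄*a₆ + a₁*a₂*a₅*a₆ + a₁*a₃*a₄*a₅ + a₁*a₃*a₄*a₆ + a₁*a₃*a₅*a₆ + a₁*a₄*a₅*a₆ + a₂*a₃*a₄*a₅ + a₂*a₃*a₄*a₆ + a₂*a₃*a₅*a₆ + a₂*a₄*a₅*a₆ + a₃*a₄*a₅*a₆) - c₀^2*(a₁ + a₂ + a₃ + a₄ + a₅ + a₆), ?_⟩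
    intro a ha'
    simp only [Set.mem_insert_iff, Set.mem_singleton_iff] at ha'
    rcases ha' with h' | h' | h' | h' | h' | h' <;> rw [h']
    exacts [key a₁ ha₁ (by ring), key a₂ ha₂ (by ring), key a₃ ha₃ (by ring),
      key a₄ ha₄ (by ring), key a₅ ha₅ (by ring), key a₆ ha₆ (by ring)]
end

section
/- Let G be a group generated by two subgroups H and K, each of which is a simple non-abelian group, and suppose H ∩ K is nontrivial. Then for every g ∈ H with g ≠ 1, the normal closure of g in G is all of G. -/
/-- If `G` is generated by two simple non-abelian subgroups with nontrivial intersection,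
then every nontrivial element of `H` has normal closure equal to `G`. -/
theorem stmt14 {G : Type*} [Group G] (H K : Subgroup G)
    (hgen : H ⊔ K = ⊤)
    (hHsimple : IsSimpleGroup H) (hKsimple : IsSimpleGroup K)
    (hHnonab : ∃ a b : H, a * b ≠ b * a) (hKnonab : ∃ a b : K, a * b ≠ b * a)
    (hint : H ⊓ K ≠ ⊥)
    (g : G) (hg : g ∈ H) (hg1 : g ≠ 1) :
    Subgroup.normalClosure {g} = ⊤ := by
  set N := Subgroup.normalClosure {g} with hN
  have hNnorm : N.Normal := Subgroup.normalClosure_normal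
  have hgN : g ∈ N := Subgroup.subset_normalClosure rfl
  have h1 : (N.subgroupOf H).Normal := hNnorm.subgroupOf H
  have hHle : H ≤ N := by
    rcases hHsimple.eq_bot_or_eq_top_of_normal _ h1 with h | h
    · exfalso
      have : (⟨g, hg⟩ : H) ∈ N.subgroupOf H := hgN
      rw [h] at this
      exact hg1 (congrArg Subtype.val (Subgroup.mem_bot.mp this))
    · exact Subgroup.subgroupOf_eq_top.mp h
  have h2 : (N.subgroupOf K).Normal := hNnorm.subgroupOf K
  have hKle : K ≤ N := by
    rcases hKsimple.eq_bot_or_eq_top_of_normal _ h2 with h | h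
    · exfalso
      apply hint
      rw [eq_bot_iff]
      intro x hx
      have hxK : x ∈ K := hx.2
      have hxN : x ∈ N := hHle hx.1
      have : (⟨x, hxK⟩ : K) ∈ N.subgroupOf K := hxN
      rw [h] at this
      simpa using congrArg Subtype.val (Subgroup.mem_bot.mp this)
    · exact Subgroup.subgroupOf_eq_top.mp h
  rw [eq_top_iff, ← hgen]
  exact sup_le hHle hKle
end
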